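/- arXiv:2501.15029 — 2 statements merged into one kernel-verified Lean document; each statement's English description precedes it below -/
import Mathlib

section
/- The map Ψ(w,p) = (sqrt(2-|w|²)·w, (1-|w|²)·p) from (closed unit disk) × (unit circle) to the 3-sphere {(a,b) : |a|²+|b|²=1} is surjective, and it is injective when restricted to pairs with |w| < 1; moreover Ψ(w,p) = Ψ(w',p') with |w| = 1 implies w = w'. -/
open Complex

noncomputable def Psi (w p : ℂ) : ℂ × ℂ :=
  ((Real.sqrt (2 - ‖w‖ ^ 2) : ℂ) * w,
    ((1 - ‖w‖ ^ 2 : ℝ) : ℂ) * p)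

/-!
Writing `t = ‖w‖`, the two components of `Ψ(w, p)` have norms `√(2 - t²) t` and `(1 - t²) ‖p‖`, and
`(√(2 - t²) t)² = 1 - (1 - t²)²`. So on the closed disk `t` is read off from the first component alone,
and then `w` itself, since the factor `√(2 - t²)` does not vanish; where `t < 1` the factor
`1 - t²` of the second component does not vanish either, which recovers `p`. Conversely a point
`(a, b)` of the sphere is hit by `w = √(1 - ‖b‖) e^{i arg a}` and `p = e^{i arg b}`.
-/

theorem norm_Psi_fst_sq {w : ℂ} (p : ℂ) (hw : ‖w‖ ^ 2 ≤ 2) :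
    ‖(Psi w p).1‖ ^ 2 = 1 - (1 - ‖w‖ ^ 2) ^ 2 := by
  rw [Psi, norm_mul, Complex.norm_real, Real.norm_eq_abs, mul_pow, sq_abs,
    Real.sq_sqrt (by linarith)]
  ring

theorem eq_of_Psi_fst_eq {w w' : ℂ} (p p' : ℂ) (hw : ‖w‖ ≤ 1) (hw' : ‖w'‖ ≤ 1)
    (h : (Psi w p).1 = (Psi w' p').1) : w = w' := by
  have hw2 : ‖w‖ ^ 2 ≤ 1 := pow_le_one₀ (norm_nonneg w) hw
  have hw'2 : ‖w'‖ ^ 2 ≤ 1 := pow_le_one₀ (norm_nonneg w') hw'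
  have hsq : (1 - ‖w‖ ^ 2) ^ 2 = (1 - ‖w'‖ ^ 2) ^ 2 := by
    have := congrArg (‖·‖ ^ 2) h
    simp only [norm_Psi_fst_sq _ (by linarith : ‖w‖ ^ 2 ≤ 2),
      norm_Psi_fst_sq _ (by linarith : ‖w'‖ ^ 2 ≤ 2)] at this
    linarith
  have hnorm : ‖w‖ ^ 2 = ‖w'‖ ^ 2 := by
    have := (pow_left_inj₀ (by linarith) (by linarith) two_ne_zero).mp hsq
    linarith
  have hsqrt : (Real.sqrt (2 - ‖w‖ ^ 2) : ℂ) ≠ 0 :=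
    ofReal_ne_zero.mpr (Real.sqrt_pos.mpr (by linarith)).ne'
  simp only [Psi, ← hnorm] at h
  exact mul_left_cancel₀ hsqrt h

theorem Psi_snd_injective {w : ℂ} (hw : ‖w‖ ≠ 1) : Function.Injective fun p ↦ (Psi w p).2 := by
  have hw2 : (1 - ‖w‖ ^ 2 : ℝ) ≠ 0 := by
    rw [sub_ne_zero, ne_comm, Ne, pow_eq_one_iff_of_nonneg (norm_nonneg w) two_ne_zero]
    exact hw
  exact fun p p' h ↦ mul_left_cancel₀ (ofReal_ne_zero.mpr hw2) h

theorem exists_Psi_eq {a b : ℂ} (hab : ‖a‖ ^ 2 + ‖b‖ ^ 2 = 1) :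
    ∃ w p : ℂ, ‖w‖ ≤ 1 ∧ ‖p‖ = 1 ∧ Psi w p = (a, b) := by
  have hb : ‖b‖ ≤ 1 := by nlinarith [norm_nonneg a, norm_nonneg b]
  set t := Real.sqrt (1 - ‖b‖)
  have ht : 0 ≤ t := Real.sqrt_nonneg _
  have ht2 : t ^ 2 = 1 - ‖b‖ := Real.sq_sqrt (by linarith)
  have hnorm : ‖(t : ℂ) * exp (arg a * I)‖ = t := by
    rw [norm_mul, norm_exp_ofReal_mul_I, Complex.norm_real, Real.norm_eq_abs, abs_of_nonneg ht,
      mul_one]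
  have hfst : Real.sqrt (2 - t ^ 2) * t = ‖a‖ := by
    refine (pow_left_inj₀ (by positivity) (norm_nonneg a) two_ne_zero).mp ?_
    rw [mul_pow, Real.sq_sqrt (by nlinarith)]
    nlinarith
  refine ⟨t * exp (arg a * I), exp (arg b * I), ?_, norm_exp_ofReal_mul_I _, ?_⟩
  · rw [hnorm, ← Real.sqrt_one]
    exact Real.sqrt_le_sqrt (by linarith [norm_nonneg b])
  · rw [Psi, hnorm, ← mul_assoc, ← ofReal_mul, hfst, ht2, sub_sub_cancel,
      norm_mul_exp_arg_mul_I, norm_mul_exp_arg_mul_I]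

/-- Ψ is onto the 3-sphere, injective where |w| < 1, and determines w when |w| = 1. -/
theorem psi_surjective_and_injective :
    (∀ a b : ℂ, ‖a‖ ^ 2 + ‖b‖ ^ 2 = 1 →
      ∃ w p : ℂ, ‖w‖ ≤ 1 ∧ ‖p‖ = 1 ∧ Psi w p = (a, b)) ∧
    (∀ w p w' p' : ℂ, ‖w‖ < 1 → ‖p‖ = 1 →
      ‖w'‖ < 1 → ‖p'‖ = 1 →
      Psi w p = Psi w' p' → w = w' ∧ p = p') ∧
    (∀ w p w' p' : ℂ, ‖w‖ = 1 → ‖p‖ = 1 →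
      ‖w'‖ ≤ 1 → ‖p'‖ = 1 →
      Psi w p = Psi w' p' → w = w') := by
  refine ⟨fun a b ↦ exists_Psi_eq, ?_, ?_⟩
  · intro w p w' p' hw _ hw' _ h
    obtain rfl := eq_of_Psi_fst_eq p p' hw.le hw'.le (congrArg Prod.fst h)
    exact ⟨rfl, Psi_snd_injective hw.ne (congrArg Prod.snd h)⟩
  · intro w p w' p' hw _ hw' _ h
    exact eq_of_Psi_fst_eq p p' hw.le hw' (congrArg Prod.fst h)
end

section
/- For (a,b) on the unit 3-sphere with b ≠ 0, setting w = a/sqrt(1 + |b|) and p = b/|b| gives the inverse of Ψ: one has |w| < 1, |p| = 1, sqrt(2-|w|²)·w = a, and (1-|w|²)·p = b. -/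
/-! On the sphere, `‖a‖² = 1 - ‖b‖² = (1 - ‖b‖)(1 + ‖b‖)`, so dividing `a` by `√(1 + ‖b‖)` gives
`‖w‖² = 1 - ‖b‖`. Then `2 - ‖w‖² = 1 + ‖b‖` undoes the scaling of `a`, and `1 - ‖w‖² = ‖b‖`
turns the phase `b / ‖b‖` back into `b`. -/

open Complex

namespace Complex

theorem norm_div_ofReal_sqrt_sq (z : ℂ) {c : ℝ} (hc : 0 ≤ c) :
    ‖z / ((√c : ℝ) : ℂ)‖ ^ 2 = ‖z‖ ^ 2 / c := by
  rw [norm_div, norm_real, Real.norm_of_nonneg (Real.sqrt_nonneg c), div_pow, Real.sq_sqrt hc]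

theorem norm_div_ofReal_norm {z : ℂ} (hz : z ≠ 0) : ‖z / ((‖z‖ : ℝ) : ℂ)‖ = 1 := by
  rw [norm_div, norm_real, norm_norm, div_self (norm_ne_zero_iff.2 hz)]

end Complex

theorem div_one_add_eq_one_sub_of_add_sq_eq_one {x r : ℝ} (h : x + r ^ 2 = 1) (hr : 0 ≤ r) :
    x / (1 + r) = 1 - r := by
  rw [div_eq_iff (by positivity)]
  linear_combination h

/-- Inverse formula for Ψ: for (a,b) on the 3-sphere with b ≠ 0,
w = a/√(1+|b|) and p = b/|b| satisfy |w| < 1, |p| = 1, and Ψ(w,p) = (a,b). -/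
theorem psi_inverse (a b : ℂ) (hab : ‖a‖ ^ 2 + ‖b‖ ^ 2 = 1)
    (hb : b ≠ 0) :
    ‖(a / ((Real.sqrt (1 + ‖b‖) : ℝ) : ℂ))‖ < 1 ∧
    ‖(b / ((‖b‖ : ℝ) : ℂ))‖ = 1 ∧
    (Real.sqrt (2 - (‖(a / ((Real.sqrt (1 + ‖b‖) : ℝ) : ℂ))‖) ^ 2) : ℂ) *
      (a / ((Real.sqrt (1 + ‖b‖) : ℝ) : ℂ)) = a ∧
    ((1 - (‖(a / ((Real.sqrt (1 + ‖b‖) : ℝ) : ℂ))‖) ^ 2 : ℝ) : ℂ) *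
      (b / ((‖b‖ : ℝ) : ℂ)) = b := by
  have hr : 0 < ‖b‖ := norm_pos_iff.2 hb
  have hw : ‖a / ((√(1 + ‖b‖) : ℝ) : ℂ)‖ ^ 2 = 1 - ‖b‖ := by
    rw [norm_div_ofReal_sqrt_sq a (by positivity)]
    exact div_one_add_eq_one_sub_of_add_sq_eq_one hab hr.le
  refine ⟨?_, norm_div_ofReal_norm hb, ?_, ?_⟩
  · rw [← sq_lt_one_iff₀ (norm_nonneg _), hw]
    linarith
  · rw [hw, show (2 : ℝ) - (1 - ‖b‖) = 1 + ‖b‖ by ring]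
    exact mul_div_cancel₀ a (ofReal_ne_zero.2 (Real.sqrt_pos.2 (by positivity)).ne')
  · rw [hw, sub_sub_cancel]
    exact mul_div_cancel₀ b (ofReal_ne_zero.2 hr.ne')
end
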